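/- arXiv:1410.2075 — 3 statements merged into one kernel-verified Lean document; each statement's English description precedes it below -/
import Mathlib

section
/- If a graph G satisfies |⋂𝒞(G)| ≥ |𝒞(G)|, where 𝒞(G) is the set of all inclusion-maximal cliques of G, then there exists a split graph H with G = H². -/
open SimpleGraph

/-- The square of a graph: join distinct vertices at distance at most 2. -/
def Gsq {V : Type} (H : SimpleGraph V) : SimpleGraph V where
  Adj u v := u ≠ v ∧ (H.Adj u v ∨ ∃ w, H.Adj u w ∧ H.Adj w v)
  symm := by
    constructor
    rintro u v ⟨h1, h2⟩
    refine ⟨h1.symm, ?_⟩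
    rcases h2 with h | ⟨w, hw1, hw2⟩
    · exact Or.inl h.symm
    · exact Or.inr ⟨w, hw2.symm, hw1.symm⟩
  loopless := ⟨fun v h => h.1 rfl⟩

/-- `C`, `I` form a split partition of `H`: `C` a clique, `I` independent. -/
def IsSplitPart {V : Type} (H : SimpleGraph V) (C I : Set V) : Prop :=
  C ∪ I = Set.univ ∧ Disjoint C I ∧ H.IsClique C ∧ ∀ a ∈ I, ∀ b ∈ I, ¬ H.Adj a b

/-- `H` is a split graph. -/
def IsSplit {V : Type} (H : SimpleGraph V) : Prop := ∃ C I, IsSplitPart H C I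

/-- The set of inclusion-maximal cliques of `G`. -/
def maxCliques {V : Type} (G : SimpleGraph V) : Set (Set V) :=
  {Q | G.IsClique Q ∧ ∀ R, G.IsClique R → Q ⊆ R → Q = R}

/-- The intersection of all maximal cliques of `G`. -/
def core {V : Type} (G : SimpleGraph V) : Set V := ⋂₀ maxCliques G

/-- The condition `|⋂𝒞(G)| ≥ |𝒞(G)|`. -/
def cliqueIneq {V : Type} (G : SimpleGraph V) : Prop :=
  (maxCliques G).ncard ≤ (core G).ncard

/-- `G` contains an induced copy of `F`. -/
def InducedCopy {α V : Type} (F : SimpleGraph α) (G : SimpleGraph V) : Prop :=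
  ∃ f : α ↪ V, ∀ a b, F.Adj a b ↔ G.Adj (f a) (f b)

/-- The `ℓ`-sun: independent set `inl i`, clique `inr i`, with `inl i` adjacent
to exactly `inr i` and `inr (i+1)` (mod ℓ). -/
def sunGraph (ℓ : ℕ) : SimpleGraph (Fin ℓ ⊕ Fin ℓ) :=
  SimpleGraph.fromRel (fun a b =>
    match a, b with
    | .inr _, .inr _ => True
    | .inl i, .inr j => j.val = i.val ∨ j.val = (i.val + 1) % ℓ
    | _, _ => False)

/-- `H` contains no induced 3-sun. -/
def Sun3Free {V : Type} (H : SimpleGraph V) : Prop := ¬ InducedCopy (sunGraph 3) H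

/-- `H` contains no induced odd sun. -/
def OddSunFree {V : Type} (H : SimpleGraph V) : Prop :=
  ∀ ℓ, 3 ≤ ℓ → Odd ℓ → ¬ InducedCopy (sunGraph ℓ) H

/-- The cycle on `n` vertices. -/
def cycleG (n : ℕ) : SimpleGraph (Fin n) :=
  SimpleGraph.fromRel (fun i j => j.val = (i.val + 1) % n)

/-- `G` is chordal: no induced cycle of length at least 4. -/
def Chordal {V : Type} (G : SimpleGraph V) : Prop :=
  ∀ n, 4 ≤ n → ¬ InducedCopy (cycleG n) G

/-- `G` is strongly chordal: chordal and `ℓ`-sun-free for all `ℓ ≥ 3`. -/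
def StronglyChordal {V : Type} (G : SimpleGraph V) : Prop :=
  Chordal G ∧ ∀ ℓ, 3 ≤ ℓ → ¬ InducedCopy (sunGraph ℓ) G

/-- The trunk `T(G)`: a split graph whose clique is `𝒞(G)` and whose
independent set is `V(G) \ ⋂𝒞(G)`, with `v` adjacent to `Q` iff `v ∈ Q`. -/
def trunk {V : Type} (G : SimpleGraph V) :
    SimpleGraph (↥(maxCliques G) ⊕ ↥{v : V | v ∉ core G}) :=
  SimpleGraph.fromRel (fun a b =>
    match a, b with
    | .inl _, .inl _ => True
    | .inl Q, .inr v => (v : V) ∈ (Q : Set V)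
    | _, _ => False)

/-- The join of two graphs. -/
def joinG {α β : Type} (G : SimpleGraph α) (H : SimpleGraph β) : SimpleGraph (α ⊕ β) :=
  SimpleGraph.fromRel (fun a b =>
    match a, b with
    | .inl x, .inl y => G.Adj x y
    | .inr x, .inr y => H.Adj x y
    | .inl _, .inr _ => True
    | _, _ => False)

/-- The vertex-to-maximal-clique incidence bipartite graph of `G`. -/
def incidence {V : Type} (G : SimpleGraph V) : SimpleGraph (V ⊕ ↥(maxCliques G)) :=
  SimpleGraph.fromRel (fun a b =>
    match a, b with
    | .inl v, .inr Q => v ∈ (Q : Set V)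
    | _, _ => False)

/-- `G` is balanced: its vertex-to-maximal-clique incidence graph has no induced
cycle of length `2k` for odd `k ≥ 3`. -/
def BalancedGraph {V : Type} (G : SimpleGraph V) : Prop :=
  ∀ k, 3 ≤ k → Odd k → ¬ InducedCopy (cycleG (2 * k)) (incidence G)

/-- `G` is clique-Helly: every nonempty pairwise intersecting family of maximal
cliques has a common vertex. -/
def CliqueHelly {V : Type} (G : SimpleGraph V) : Prop :=
  ∀ S ⊆ maxCliques G, S.Nonempty →
    (∀ Q ∈ S, ∀ R ∈ S, (Q ∩ R).Nonempty) → (⋂₀ S).Nonempty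

/-- `G` is hereditary clique-Helly. -/
def HCH {V : Type} (G : SimpleGraph V) : Prop :=
  ∀ S : Set V, CliqueHelly (G.induce S)

/-- Adding an apex vertex adjacent exactly to the vertices of `C`. -/
def addApex {V : Type} (H : SimpleGraph V) (C : Set V) : SimpleGraph (Option V) :=
  SimpleGraph.fromRel (fun a b =>
    match a, b with
    | some x, some y => H.Adj x y
    | none, some y => y ∈ C
    | _, _ => False)

/-- A class of graphs is hereditary if it is closed under induced subgraphs
(up to isomorphism). -/
def Hereditary (𝒢 : ∀ α : Type, SimpleGraph α → Prop) : Prop :=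
  ∀ (α β : Type) (F : SimpleGraph α) (G : SimpleGraph β),
    𝒢 β G → InducedCopy F G → 𝒢 α F

/-- A class `𝒢` is simple: every `H ∈ 𝒢` can be mapped to some `H' ∈ 𝒢` with
`H'² ≅ H² ⊕ K₁`. -/
def SimpleClass (𝒢 : ∀ α : Type, SimpleGraph α → Prop) : Prop :=
  ∀ (α : Type) (H : SimpleGraph α), 𝒢 α H →
    ∃ (β : Type) (H' : SimpleGraph β), 𝒢 β H' ∧
      Nonempty (Gsq H' ≃g joinG (Gsq H) (⊤ : SimpleGraph (Fin 1)))

/-- The Hajós-type graphs `G₁,…,G₄` (`hajos 0 = G₁`, …, `hajos 3 = G₄`): the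
3-sun with `k` additional edges among its degree-2 vertices. -/
def hajos (k : ℕ) : SimpleGraph (Fin 3 ⊕ Fin 3) :=
  SimpleGraph.fromRel (fun a b =>
    match a, b with
    | .inr _, .inr _ => True
    | .inl i, .inr j => j.val = i.val ∨ j.val = (i.val + 1) % 3
    | .inl i, .inl j => (i.val = 0 ∧ j.val = 1 ∧ 1 ≤ k) ∨
        (i.val = 1 ∧ j.val = 2 ∧ 2 ≤ k) ∨ (i.val = 0 ∧ j.val = 2 ∧ 3 ≤ k)
    | _, _ => False)
lemma my_exists_max_clique {V : Type} [Fintype V] (G : SimpleGraph V) (s : Set V)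
    (hs : G.IsClique s) : ∃ Q ∈ maxCliques G, s ⊆ Q := by
  have hfin : {R | G.IsClique R ∧ s ⊆ R}.Finite := Set.toFinite _
  obtain ⟨Q, hQm⟩ := Set.Finite.exists_maximal hfin ⟨s, hs, subset_rfl⟩
  have hQ := hQm.prop
  exact ⟨Q, ⟨hQ.1, fun R hR hQR => le_antisymm hQR (hQm.2 ⟨hR, hQ.2.trans hQR⟩ hQR)⟩, hQ.2⟩

theorem square_root_exists_of_cliqueIneq {V : Type} [Fintype V] (G : SimpleGraph V)
    (h : cliqueIneq G) :
    ∃ H : SimpleGraph V, IsSplit H ∧ Gsq H = G := by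
  classical
  cases isEmpty_or_nonempty V with
  | inl hE =>
    refine ⟨⊥, ⟨Set.univ, ∅, by simp, by simp, fun a _ => isEmptyElim a,
      fun a ha => (Set.notMem_empty a ha).elim⟩, ?_⟩
    ext v w
    exact isEmptyElim v
  | inr hne =>
    obtain ⟨Q0, hQ0, -⟩ := my_exists_max_clique G ∅ (by simp)
    have hMfin : (maxCliques G).Finite := Set.toFinite _
    have hCfin : (core G).Finite := Set.toFinite _
    have h' : (maxCliques G).ncard ≤ (core G).ncard := h
    have hcore_ne : (core G).Nonempty := by
      have h1 : 0 < (maxCliques G).ncard := (Set.ncard_pos hMfin).mpr ⟨Q0, hQ0⟩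
      exact (Set.ncard_pos hCfin).mp (lt_of_lt_of_le h1 h')
    haveI := hMfin.fintype
    haveI := hCfin.fintype
    have hemb : Nonempty (↥(maxCliques G) ↪ ↥(core G)) := by
      apply Function.Embedding.nonempty_of_card_le
      rwa [← Nat.card_coe_set_eq, ← Nat.card_coe_set_eq,
        Nat.card_eq_fintype_card, Nat.card_eq_fintype_card] at h'
    obtain ⟨f⟩ := hemb
    have hcore_sub : ∀ Q ∈ maxCliques G, core G ⊆ Q := fun Q hQ => Set.sInter_subset_of_mem hQ
    have hmemQ : ∀ v : V, ∃ Q ∈ maxCliques G, v ∈ Q := by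
      intro v
      obtain ⟨Q, hQ, hsub⟩ := my_exists_max_clique G {v} (Set.pairwise_singleton v G.Adj)
      exact ⟨Q, hQ, hsub rfl⟩
    have hadjQ : ∀ Q ∈ maxCliques G, ∀ v ∈ Q, ∀ w ∈ Q, v ≠ w → G.Adj v w :=
      fun Q hQ v hv w hw hvw => hQ.1 hv hw hvw
    have hcore_adj : ∀ v ∈ core G, ∀ w ∈ core G, v ≠ w → G.Adj v w := by
      intro v hv w hw hvw
      exact hadjQ Q0 hQ0 v (hcore_sub Q0 hQ0 hv) w (hcore_sub Q0 hQ0 hw) hvw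
    set rel : V → V → Prop := fun a b =>
      (a ∈ core G ∧ b ∈ core G) ∨ ∃ Q : ↥(maxCliques G), a ∈ (Q : Set V) ∧ b = ↑(f Q)
      with hrel
    set H := SimpleGraph.fromRel rel with hH
    have mkAdj : ∀ a b, a ≠ b → (rel a b ∨ rel b a) → H.Adj a b :=
      fun a b h1 h2 => (SimpleGraph.fromRel_adj rel a b).mpr ⟨h1, h2⟩
    have unAdj : ∀ a b, H.Adj a b → a ≠ b ∧ (rel a b ∨ rel b a) :=
      fun a b hab => (SimpleGraph.fromRel_adj rel a b).mp hab
    have hfQcore : ∀ Q : ↥(maxCliques G), (f Q : V) ∈ core G := fun Q => (f Q).2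
    have hHG : ∀ a b, H.Adj a b → G.Adj a b := by
      intro a b hab
      obtain ⟨hne', hr⟩ := unAdj a b hab
      rcases hr with (⟨ha, hb⟩ | ⟨Q, haQ, hb⟩) | (⟨hb, ha⟩ | ⟨Q, hbQ, ha⟩)
      · exact hcore_adj a ha b hb hne'
      · exact hb ▸ hadjQ (Q : Set V) Q.2 a haQ _ (hcore_sub _ Q.2 (hfQcore Q)) (hb ▸ hne')
      · exact hcore_adj a ha b hb hne'
      · exact ha ▸ (hadjQ (Q : Set V) Q.2 b hbQ _ (hcore_sub _ Q.2 (hfQcore Q)) (ha ▸ hne'.symm)).symm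
    refine ⟨H, ⟨core G, (core G)ᶜ, by simp, disjoint_compl_right, ?_, ?_⟩, ?_⟩
    · intro a ha b hb hab
      exact mkAdj a b hab (Or.inl (Or.inl ⟨ha, hb⟩))
    · intro a ha b hb hAdj
      obtain ⟨-, hr⟩ := unAdj a b hAdj
      rcases hr with (⟨ha', -⟩ | ⟨Q, -, hb'⟩) | (⟨-, ha'⟩ | ⟨Q, -, ha'⟩)
      · exact ha ha'
      · exact hb (hb' ▸ hfQcore Q)
      · exact ha ha'
      · exact ha (ha' ▸ hfQcore Q)
    · ext v w
      show (v ≠ w ∧ (H.Adj v w ∨ ∃ x, H.Adj v x ∧ H.Adj x w)) ↔ G.Adj v w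
      constructor
      · rintro ⟨hvw, hd⟩
        rcases hd with hd | ⟨x, hvx, hxw⟩
        · exact hHG v w hd
        · by_cases hv : v ∈ core G
          · obtain ⟨Q, hQ, hwQ⟩ := hmemQ w
            exact hadjQ Q hQ v (hcore_sub Q hQ hv) w hwQ hvw
          · by_cases hw : w ∈ core G
            · obtain ⟨Q, hQ, hvQ⟩ := hmemQ v
              exact hadjQ Q hQ v hvQ w (hcore_sub Q hQ hw) hvw
            · have hx1 : ∃ Q : ↥(maxCliques G), v ∈ (Q : Set V) ∧ x = ↑(f Q) := by
                rcases (unAdj v x hvx).2 with (⟨hv', -⟩ | hQ) | (⟨-, hv'⟩ | ⟨Q, -, hv'⟩)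
                · exact absurd hv' hv
                · exact hQ
                · exact absurd hv' hv
                · exact absurd (hv' ▸ hfQcore Q) hv
              have hx2 : ∃ Q : ↥(maxCliques G), w ∈ (Q : Set V) ∧ x = ↑(f Q) := by
                rcases (unAdj x w hxw).2 with (⟨-, hw'⟩ | ⟨Q, -, hw'⟩) | (⟨hw', -⟩ | hQ)
                · exact absurd hw' hw
                · exact absurd (hw' ▸ hfQcore Q) hw
                · exact absurd hw' hw
                · exact hQ
              obtain ⟨Q1, hvQ1, hx1'⟩ := hx1
              obtain ⟨Q2, hwQ2, hx2'⟩ := hx2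
              have hQeq : Q1 = Q2 := f.injective (Subtype.coe_injective (hx1'.symm.trans hx2'))
              rw [← hQeq] at hwQ2
              exact hadjQ (Q1 : Set V) Q1.2 v hvQ1 w hwQ2 hvw
      · intro hvw
        have hne' := hvw.ne
        by_cases hv : v ∈ core G <;> by_cases hw : w ∈ core G
        · exact ⟨hne', Or.inl (mkAdj v w hne' (Or.inl (Or.inl ⟨hv, hw⟩)))⟩
        · obtain ⟨Q, hQ, hwQ⟩ := hmemQ w
          set u : V := ↑(f ⟨Q, hQ⟩) with hu'
          have hu : u ∈ core G := hfQcore _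
          have hwu : H.Adj w u :=
            mkAdj w u (fun e => hw (e ▸ hu)) (Or.inl (Or.inr ⟨⟨Q, hQ⟩, hwQ, rfl⟩))
          by_cases huv : u = v
          · exact ⟨hne', Or.inl (huv ▸ hwu).symm⟩
          · exact ⟨hne', Or.inr ⟨u, mkAdj v u (Ne.symm huv) (Or.inl (Or.inl ⟨hv, hu⟩)), hwu.symm⟩⟩
        · obtain ⟨Q, hQ, hvQ⟩ := hmemQ v
          set u : V := ↑(f ⟨Q, hQ⟩) with hu'
          have hu : u ∈ core G := hfQcore _
          have hvu : H.Adj v u :=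
            mkAdj v u (fun e => hv (e ▸ hu)) (Or.inl (Or.inr ⟨⟨Q, hQ⟩, hvQ, rfl⟩))
          by_cases huw : u = w
          · exact ⟨hne', Or.inl (huw ▸ hvu)⟩
          · exact ⟨hne', Or.inr ⟨u, hvu, mkAdj u w huw (Or.inl (Or.inl ⟨hu, hw⟩))⟩⟩
        · have hcl : G.IsClique {v, w} := Set.pairwise_pair.mpr (fun _ => ⟨hvw, hvw.symm⟩)
          obtain ⟨Q, hQ, hsub⟩ := my_exists_max_clique G {v, w} hcl
          set u : V := ↑(f ⟨Q, hQ⟩) with hu'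
          have hu : u ∈ core G := hfQcore _
          have hvu : H.Adj v u :=
            mkAdj v u (fun e => hv (e ▸ hu))
              (Or.inl (Or.inr ⟨⟨Q, hQ⟩, hsub (Set.mem_insert _ _), rfl⟩))
          have hwu : H.Adj w u :=
            mkAdj w u (fun e => hw (e ▸ hu))
              (Or.inl (Or.inr ⟨⟨Q, hQ⟩, hsub (Set.mem_insert_of_mem _ rfl), rfl⟩))
          exact ⟨hne', Or.inr ⟨u, hvu, hwu.symm⟩⟩
end

section
/- A graph G is the square of a connected 3-sun-free split graph if and only if G is (G₁, G₂, G₃, G₄)-free and satisfies |⋂𝒞(G)| ≥ |𝒞(G)|, where G₁,…,G₄ are the four Hajós-type graphs characterizing hereditary clique-Helly graphs. -/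
open SimpleGraph

lemma sun_exists {V : Type} (H : SimpleGraph V) (u c : Fin 3 → V)
    (huc : ∀ i j, u i ≠ c j)
    (hu : ∀ i j, i ≠ j → ¬ H.Adj (u i) (u j))
    (huinj : Function.Injective u)
    (hc : ∀ i j, i ≠ j → H.Adj (c i) (c j))
    (hadj : ∀ i, H.Adj (u i) (c i) ∧ H.Adj (u i) (c (i+1)) ∧ ¬ H.Adj (u i) (c (i+2))) :
    InducedCopy (sunGraph 3) H := by
  have hcinj : Function.Injective c := by
    intro i j h
    by_contra hne
    exact (hc i j hne).ne h
  refine ⟨⟨Sum.elim u c, ?_⟩, ?_⟩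
  · rintro (i|i) (j|j) h <;> simp only [Sum.elim_inl, Sum.elim_inr] at h
    · rw [huinj h]
    · exact absurd h (huc i j)
    · exact absurd h.symm (huc j i)
    · rw [hcinj h]
  · rintro (i|i) (j|j) <;> fin_cases i <;> fin_cases j <;>
      simp only [Function.Embedding.coeFn_mk, Sum.elim_inl, Sum.elim_inr] <;>
      first
        | exact iff_of_false (by simp [sunGraph]) (H.loopless.irrefl _)
        | exact iff_of_false (by simp [sunGraph]) (hu _ _ (by decide))
        | exact iff_of_true (by simp [sunGraph]) ((hadj _).1)
        | exact iff_of_true (by simp [sunGraph]) ((hadj _).2.1)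
        | exact iff_of_true (by simp [sunGraph]) ((hadj _).1.symm)
        | exact iff_of_true (by simp [sunGraph]) ((hadj _).2.1.symm)
        | exact iff_of_false (by simp [sunGraph]) ((hadj _).2.2)
        | exact iff_of_false (by simp [sunGraph]) (fun h => (hadj _).2.2 h.symm)
        | exact iff_of_true (by simp [sunGraph]) ((hadj 0).2.1.symm)
        | exact iff_of_true (by simp [sunGraph]) ((hadj 1).2.1.symm)
        | exact iff_of_true (by simp [sunGraph]) ((hadj 2).2.1.symm)
        | exact iff_of_true (by simp [sunGraph]) (hc _ _ (by decide))


set_option maxHeartbeats 1000000 in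
lemma hajos_embed {V : Type} (G : SimpleGraph V) (k : ℕ) (s w : Fin 3 → V)
    (hs : ∀ i j, i ≠ j → G.Adj (s i) (s j))
    (hw : ∀ i, G.Adj (w i) (s i) ∧ G.Adj (w i) (s (i+2)) ∧ ¬ G.Adj (w i) (s (i+1)))
    (hwne : ∀ i j, w i ≠ s j)
    (hwinj : ∀ i j, i ≠ j → w i ≠ w j)
    (e1 : (1 ≤ k) ↔ G.Adj (w 1) (w 2))
    (e2 : (2 ≤ k) ↔ G.Adj (w 2) (w 0))
    (e3 : (3 ≤ k) ↔ G.Adj (w 1) (w 0)) :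
    InducedCopy (hajos k) G := by
  refine ⟨⟨Sum.elim (fun i => w (i+1)) s, ?_⟩, ?_⟩
  · rintro (i|i) (j|j) h <;> simp only [Sum.elim_inl, Sum.elim_inr] at h
    · revert h; fin_cases i <;> fin_cases j <;> intro h <;>
        first
          | rfl
          | exact absurd h (hwinj _ _ (by decide))
    · exact absurd h (hwne _ _)
    · exact absurd h.symm (hwne _ _)
    · by_contra hne; exact (hs i j (fun hh => hne (congrArg Sum.inr hh))).ne h
  · rintro (i|i) (j|j) <;> fin_cases i <;> fin_cases j <;>
      simp only [Function.Embedding.coeFn_mk, Sum.elim_inl, Sum.elim_inr] <;>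
      first
        | exact iff_of_false (by simp [hajos]) (G.loopless.irrefl _)
        | exact Iff.trans (by simp [hajos]) e1
        | exact Iff.trans (by simp [hajos]) e2
        | exact Iff.trans (by simp [hajos]) e3
        | exact Iff.trans (by simp [hajos]) (e1.trans (G.adj_comm _ _))
        | exact Iff.trans (by simp [hajos]) (e2.trans (G.adj_comm _ _))
        | exact Iff.trans (by simp [hajos]) (e3.trans (G.adj_comm _ _))
        | exact iff_of_true (by simp [hajos]) ((hw _).1)
        | exact iff_of_true (by simp [hajos]) ((hw _).2.1)
        | exact iff_of_true (by simp [hajos]) ((hw 0).1.symm)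
        | exact iff_of_true (by simp [hajos]) ((hw 1).1.symm)
        | exact iff_of_true (by simp [hajos]) ((hw 2).1.symm)
        | exact iff_of_true (by simp [hajos]) ((hw 0).2.1.symm)
        | exact iff_of_true (by simp [hajos]) ((hw 1).2.1.symm)
        | exact iff_of_true (by simp [hajos]) ((hw 2).2.1.symm)
        | exact iff_of_false (by simp [hajos]) ((hw _).2.2)
        | exact iff_of_false (by simp [hajos]) (fun h => (hw 0).2.2 h.symm)
        | exact iff_of_false (by simp [hajos]) (fun h => (hw 1).2.2 h.symm)
        | exact iff_of_false (by simp [hajos]) (fun h => (hw 2).2.2 h.symm)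
        | exact iff_of_true (by simp [hajos]) (hs _ _ (by decide))

lemma hajos_of_pattern {V : Type} (G : SimpleGraph V) (s w : Fin 3 → V)
    (hs : ∀ i j, i ≠ j → G.Adj (s i) (s j))
    (hw : ∀ i, G.Adj (w i) (s i) ∧ G.Adj (w i) (s (i+2)) ∧ ¬ G.Adj (w i) (s (i+1)))
    (hwne : ∀ i j, w i ≠ s j) :
    ∃ k ≤ 3, InducedCopy (hajos k) G := by
  have n01 : w 0 ≠ w 1 := fun h => (hw 0).2.2 (by rw [h]; exact (hw 1).1)
  have n02 : w 0 ≠ w 2 := fun h => (hw 0).2.2 (by rw [h]; exact (hw 2).2.1)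
  have n12 : w 1 ≠ w 2 := fun h => (hw 1).2.2 (by rw [h]; exact (hw 2).1)
  have hwinj : ∀ i j : Fin 3, i ≠ j → w i ≠ w j := by
    intro i j hij
    fin_cases i <;> fin_cases j <;>
      first
        | exact absurd rfl hij
        | exact n01
        | exact n02
        | exact n12
        | exact n01.symm
        | exact n02.symm
        | exact n12.symm
  have key : ∀ (a : Fin 3) (k : ℕ), k ≤ 3 →
      ((1 ≤ k) ↔ G.Adj (w (a+1)) (w (a+2))) →
      ((2 ≤ k) ↔ G.Adj (w (a+2)) (w a)) →
      ((3 ≤ k) ↔ G.Adj (w (a+1)) (w a)) →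
      ∃ k' ≤ 3, InducedCopy (hajos k') G := by
    intro a k hk e1 e2 e3
    refine ⟨k, hk, hajos_embed G k (fun j => s (j+a)) (fun i => w (i+a)) ?_ ?_ ?_ ?_ ?_ ?_ ?_⟩
    · intro i j hij; exact hs _ _ (fun hh => hij (add_right_cancel hh))
    · intro i
      refine ⟨(hw (i+a)).1, ?_, ?_⟩
      · have h2 := (hw (i+a)).2.1
        rwa [add_right_comm i a 2] at h2
      · have h2 := (hw (i+a)).2.2
        rwa [add_right_comm i a 1] at h2
    · intro i j; exact hwne _ _
    · intro i j hij; exact hwinj _ _ (fun hh => hij (add_right_cancel hh))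
    · show (1 ≤ k) ↔ G.Adj (w (1+a)) (w (2+a))
      rw [add_comm (1:Fin 3) a, add_comm (2:Fin 3) a]; exact e1
    · show (2 ≤ k) ↔ G.Adj (w (2+a)) (w (0+a))
      rw [add_comm (2:Fin 3) a, zero_add]; exact e2
    · show (3 ≤ k) ↔ G.Adj (w (1+a)) (w (0+a))
      rw [add_comm (1:Fin 3) a, zero_add]; exact e3
  by_cases h01 : G.Adj (w 0) (w 1) <;> by_cases h12 : G.Adj (w 1) (w 2) <;>
    by_cases h02 : G.Adj (w 0) (w 2)
  · exact key 0 3 (by norm_num) (iff_of_true (by norm_num) h12)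
      (iff_of_true (by norm_num) h02.symm) (iff_of_true (by norm_num) h01.symm)
  · exact key 2 2 (by norm_num) (iff_of_true (by norm_num) h01)
      (iff_of_true (by norm_num) h12) (iff_of_false (by norm_num) h02)
  · exact key 1 2 (by norm_num) (iff_of_true (by norm_num) h02.symm)
      (iff_of_true (by norm_num) h01) (iff_of_false (by norm_num) (fun h => h12 h.symm))
  · exact key 2 1 (by norm_num) (iff_of_true (by norm_num) h01)
      (iff_of_false (by norm_num) h12) (iff_of_false (by norm_num) h02)
  · exact key 0 2 (by norm_num) (iff_of_true (by norm_num) h12)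
      (iff_of_true (by norm_num) h02.symm) (iff_of_false (by norm_num) (fun h => h01 h.symm))
  · exact key 0 1 (by norm_num) (iff_of_true (by norm_num) h12)
      (iff_of_false (by norm_num) (fun h => h02 h.symm))
      (iff_of_false (by norm_num) (fun h => h01 h.symm))
  · exact key 1 1 (by norm_num) (iff_of_true (by norm_num) h02.symm)
      (iff_of_false (by norm_num) h01) (iff_of_false (by norm_num) (fun h => h12 h.symm))
  · exact key 0 0 (by norm_num) (iff_of_false (by norm_num) h12)
      (iff_of_false (by norm_num) (fun h => h02 h.symm))
      (iff_of_false (by norm_num) (fun h => h01 h.symm))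

lemma exists_maxClique {V : Type} [Fintype V] (G : SimpleGraph V) (Q : Set V)
    (hQ : G.IsClique Q) : ∃ R ∈ maxCliques G, Q ⊆ R := by
  classical
  obtain ⟨R, hR, hmax⟩ := Set.Finite.exists_maximalFor id {R | G.IsClique R ∧ Q ⊆ R}
    (Set.toFinite _) ⟨Q, hQ, subset_rfl⟩
  exact ⟨R, ⟨hR.1, fun S hS hRS => le_antisymm hRS (hmax ⟨hS, hR.2.trans hRS⟩ hRS)⟩, hR.2⟩

lemma core_subset_of_mem {V : Type} {G : SimpleGraph V} {Q : Set V}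
    (h : Q ∈ maxCliques G) : core G ⊆ Q := fun _ hv => hv Q h

lemma backward_dir {V : Type} [Fintype V] (G : SimpleGraph V)
    (hhaj : ∀ k ≤ 3, ¬ InducedCopy (hajos k) G) (hineq : cliqueIneq G) :
    ∃ H : SimpleGraph V, IsSplit H ∧ Sun3Free H ∧ H.Connected ∧ Gsq H = G := by
  classical
  rcases isEmpty_or_nonempty V with hV | hV
  · exfalso
    have h1 : maxCliques G = {∅} := by
      ext S
      constructor
      · intro _; exact Set.eq_empty_of_isEmpty S
      · rintro rfl
        exact ⟨by simp, fun R _ _ => (Set.eq_empty_of_isEmpty R).symm⟩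
    have h2 : core G = ∅ := Set.eq_empty_of_isEmpty _
    rw [cliqueIneq, h1, h2] at hineq
    simp at hineq
  -- nonempty case
  have hfin1 : (maxCliques G).Finite := Set.toFinite _
  have hfin2 : (core G).Finite := Set.toFinite _
  haveI i1 := hfin1.fintype
  haveI i2 := hfin2.fintype
  have hcard : Fintype.card (maxCliques G) ≤ Fintype.card (core G) := by
    have e1 : Fintype.card (maxCliques G) = (maxCliques G).ncard := by
      rw [← Nat.card_eq_fintype_card, Nat.card_coe_set_eq]
    have e2 : Fintype.card (core G) = (core G).ncard := by
      rw [← Nat.card_eq_fintype_card, Nat.card_coe_set_eq]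
    rw [e1, e2]; exact hineq
  obtain ⟨e⟩ := Function.Embedding.nonempty_of_card_le hcard
  set g : ↥(maxCliques G) → V := fun Q => (e Q : V) with hg
  have hginj : Function.Injective g := fun a b h => e.injective (Subtype.val_injective h)
  have hgcore : ∀ Q, g Q ∈ core G := fun Q => (e Q).2
  have hvert : ∀ v : V, ∃ Q ∈ maxCliques G, v ∈ Q := by
    intro v
    obtain ⟨R, hR, hsub⟩ := exists_maxClique G {v} (G.isClique_singleton v)
    exact ⟨R, hR, hsub rfl⟩
  obtain ⟨Q₀, hQ₀, _⟩ := hvert (Classical.arbitrary V)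
  set H : SimpleGraph V :=
    SimpleGraph.fromRel (fun a b => ∃ Q : ↥(maxCliques G), a = g Q ∧ b ∈ (Q : Set V)) with hHdef
  have hH : ∀ a b, H.Adj a b ↔ a ≠ b ∧
      ((∃ Q : ↥(maxCliques G), a = g Q ∧ b ∈ (Q : Set V)) ∨
       (∃ Q : ↥(maxCliques G), b = g Q ∧ a ∈ (Q : Set V))) := by
    intro a b; rw [hHdef]; exact SimpleGraph.fromRel_adj _ a b
  -- adjacency from clique membership
  have hGadj : ∀ (Q : ↥(maxCliques G)) (b : V), b ∈ (Q : Set V) → g Q ≠ b → H.Adj (g Q) b :=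
    fun Q b hb hne => (hH _ _).mpr ⟨hne, Or.inl ⟨Q, rfl, hb⟩⟩
  have hrange_clique : ∀ a b : V, a ∈ Set.range g → b ∈ Set.range g → a ≠ b → H.Adj a b := by
    rintro a b ⟨Q, rfl⟩ ⟨Q', rfl⟩ hne
    exact hGadj Q (g Q') (core_subset_of_mem Q.2 (hgcore Q')) hne
  have hadj_range : ∀ a b, H.Adj a b → a ∈ Set.range g ∨ b ∈ Set.range g := by
    intro a b hab
    rcases (hH _ _).mp hab with ⟨_, ⟨Q, rfl, _⟩ | ⟨Q, rfl, _⟩⟩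
    · exact Or.inl ⟨Q, rfl⟩
    · exact Or.inr ⟨Q, rfl⟩
  have HtoG : ∀ a b, H.Adj a b → G.Adj a b := by
    intro a b hab
    rcases (hH _ _).mp hab with ⟨hne, ⟨Q, rfl, hb⟩ | ⟨Q, rfl, ha⟩⟩
    · exact Q.2.1 (core_subset_of_mem Q.2 (hgcore Q)) hb hne
    · exact Q.2.1 ha (core_subset_of_mem Q.2 (hgcore Q)) hne
  have hGsq : Gsq H = G := by
    ext a b
    constructor
    · rintro ⟨hne, hadj | ⟨x, h1, h2⟩⟩
      · exact HtoG _ _ hadj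
      · have hab : ∃ Q : ↥(maxCliques G), a ∈ (Q : Set V) ∧ b ∈ (Q : Set V) := by
          rcases (hH _ _).mp h1 with ⟨_, ⟨Q, rfl, hx⟩ | ⟨Q, hx, ha⟩⟩
          · -- a = g Q ∈ core
            rcases (hH _ _).mp h2 with ⟨_, ⟨Q', hx', hb⟩ | ⟨Q', rfl, hx'⟩⟩
            · -- x = g Q' , b ∈ Q'
              exact ⟨Q', core_subset_of_mem Q'.2 (hgcore Q), hb⟩
            · -- b = g Q' ∈ core
              exact ⟨⟨Q₀, hQ₀⟩, core_subset_of_mem hQ₀ (hgcore Q),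
                core_subset_of_mem hQ₀ (hgcore Q')⟩
          · -- x = g Q, a ∈ Q
            rcases (hH _ _).mp h2 with ⟨_, ⟨Q', hx', hb⟩ | ⟨Q', rfl, hx'⟩⟩
            · -- x = g Q', b ∈ Q'
              have : Q = Q' := hginj (hx ▸ hx')
              exact ⟨Q, ha, this ▸ hb⟩
            · -- b = g Q' ∈ core ⊆ Q
              exact ⟨Q, ha, core_subset_of_mem Q.2 (hgcore Q')⟩
        obtain ⟨Q, ha, hb⟩ := hab
        exact Q.2.1 ha hb hne
    · intro hab
      have hne := hab.ne
      have hcl : G.IsClique {a, b} := by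
        intro x hx y hy hxy
        rcases hx with rfl | hx <;> rcases hy with rfl | hy
        · exact absurd rfl hxy
        · rw [Set.mem_singleton_iff] at hy; subst hy; exact hab
        · rw [Set.mem_singleton_iff] at hx; subst hx; exact hab.symm
        · rw [Set.mem_singleton_iff] at hx hy; subst hx; subst hy; exact absurd rfl hxy
      obtain ⟨Q, hQ, hsubQ⟩ := exists_maxClique G _ hcl
      have haQ : a ∈ Q := hsubQ (Set.mem_insert _ _)
      have hbQ : b ∈ Q := hsubQ (Set.mem_insert_of_mem _ rfl)
      refine ⟨hne, ?_⟩
      by_cases hua : g ⟨Q, hQ⟩ = a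
      · exact Or.inl ((hH _ _).mpr ⟨hne, Or.inl ⟨⟨Q, hQ⟩, hua.symm, hbQ⟩⟩)
      · by_cases hub : g ⟨Q, hQ⟩ = b
        · exact Or.inl ((hH _ _).mpr ⟨hne, Or.inr ⟨⟨Q, hQ⟩, hub.symm, haQ⟩⟩)
        · exact Or.inr ⟨g ⟨Q, hQ⟩, ((hGadj ⟨Q, hQ⟩ a haQ hua).symm),
            hGadj ⟨Q, hQ⟩ b hbQ hub⟩
  have hsplit : IsSplit H := by
    refine ⟨Set.range g, (Set.range g)ᶜ, Set.union_compl_self _, disjoint_compl_right, ?_, ?_⟩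
    · intro a ha b hb hne
      exact hrange_clique a b ha hb hne
    · intro a ha b hb hab
      rcases hadj_range a b hab with h | h
      · exact ha h
      · exact hb h
  have hconn : H.Connected := by
    have hre : ∀ v, H.Reachable v (g ⟨Q₀, hQ₀⟩) := by
      intro v
      obtain ⟨Q, hQ, hv⟩ := hvert v
      have h1 : H.Reachable v (g ⟨Q, hQ⟩) := by
        by_cases hvq : g ⟨Q, hQ⟩ = v
        · rw [hvq]
        · exact (hGadj ⟨Q, hQ⟩ v hv hvq).reachable.symm
      refine h1.trans ?_
      by_cases heq : g ⟨Q, hQ⟩ = g ⟨Q₀, hQ₀⟩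
      · rw [heq]
      · exact (hrange_clique _ _ ⟨_, rfl⟩ ⟨_, rfl⟩ heq).reachable
    exact ⟨fun a b => (hre a).trans (hre b).symm⟩
  refine ⟨H, hsplit, ?_, hconn, hGsq⟩
  -- Sun3Free
  rintro ⟨f, hf⟩
  set t : Fin 3 → V := fun i => f (Sum.inr i) with ht
  set s : Fin 3 → V := fun i => f (Sum.inl i) with hs
  have htadj : ∀ i j : Fin 3, i ≠ j → H.Adj (t i) (t j) := by
    intro i j hij
    refine (hf (Sum.inr i) (Sum.inr j)).mp ?_
    simp [sunGraph]
    exact hij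
  have hst : ∀ i : Fin 3, H.Adj (s i) (t i) ∧ H.Adj (s i) (t (i+1)) ∧ ¬ H.Adj (s i) (t (i+2)) := by
    intro i
    fin_cases i <;>
      exact ⟨(hf _ _).mp (by simp [sunGraph]), (hf _ _).mp (by simp [sunGraph]),
        fun h => by simpa [sunGraph] using (hf _ _).mpr h⟩
  have hsindep : ∀ i j : Fin 3, ¬ H.Adj (s i) (s j) := by
    intro i j h
    simpa [sunGraph] using (hf (Sum.inl i) (Sum.inl j)).mpr h
  have hne1 : ∀ i : Fin 3, i ≠ i + 1 := by decide
  have hne2 : ∀ i : Fin 3, i ≠ i + 2 := by decide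
  have h3 : ∀ i : Fin 3, i + 2 + 1 = i := by decide
  have h4 : ∀ i : Fin 3, i + 1 + 2 = i := by decide
  have htr : ∀ i, t i ∈ Set.range g := by
    intro i
    by_contra hti
    have ht1 : t (i+1) ∈ Set.range g := by
      rcases hadj_range _ _ (htadj i (i+1) (hne1 i)) with h | h
      · exact absurd h hti
      · exact h
    have ht2 : t (i+2) ∈ Set.range g := by
      rcases hadj_range _ _ (htadj i (i+2) (hne2 i)) with h | h
      · exact absurd h hti
      · exact h
    have hs1 : s i ∈ Set.range g := by
      rcases hadj_range _ _ (hst i).1 with h | h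
      · exact h
      · exact absurd h hti
    have hs2 : s (i+2) ∈ Set.range g := by
      have := (hst (i+2)).2.1
      rw [h3 i] at this
      rcases hadj_range _ _ this with h | h
      · exact h
      · exact absurd h hti
    have hnes : s i ≠ s (i+2) := fun h => (hne2 i) (Sum.inl_injective (f.injective h))
    exact hsindep i (i+2) (hrange_clique _ _ hs1 hs2 hnes)
  have hQs : ∀ i, ∃ Q : ↥(maxCliques G), g Q = t i := fun i => htr i
  choose Qs hQsg using hQs
  have hsnr : ∀ i, s i ∉ Set.range g := by
    rintro i ⟨P, hP⟩
    apply (hst i).2.2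
    have hci : s i ∈ (Qs (i+2) : Set V) :=
      core_subset_of_mem (Qs (i+2)).2 (hP ▸ hgcore P)
    have hne : g (Qs (i+2)) ≠ s i := by
      rw [hQsg]
      intro h
      exact absurd (f.injective h) (by simp)
    have := hGadj (Qs (i+2)) (s i) hci hne
    rw [hQsg] at this
    exact this.symm
  have hmem : ∀ i j : Fin 3, H.Adj (s i) (t j) → s i ∈ (Qs j : Set V) := by
    intro i j hadj
    rcases (hH _ _).mp hadj with ⟨hne, ⟨Q, hsi, _⟩ | ⟨Q, htj, hsi⟩⟩
    · exact absurd ⟨Q, hsi.symm⟩ (hsnr i)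
    · have hQeq : Q = Qs j := hginj (htj.symm.trans (hQsg j).symm)
      exact hQeq ▸ hsi
  have hsQ1 : ∀ i, s i ∈ (Qs i : Set V) := fun i => hmem i i (hst i).1
  have hsQ2 : ∀ i, s i ∈ (Qs (i+1) : Set V) := fun i => hmem i (i+1) (hst i).2.1
  have hsQ3 : ∀ i, s i ∉ (Qs (i+2) : Set V) := by
    intro i hmem'
    apply (hst i).2.2
    have hne : g (Qs (i+2)) ≠ s i := by
      rw [hQsg]
      intro h
      exact absurd (f.injective h) (by simp)
    have := hGadj (Qs (i+2)) (s i) hmem' hne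
    rw [hQsg] at this
    exact this.symm
  have hsne : ∀ i j : Fin 3, i ≠ j → s i ≠ s j :=
    fun i j hij h => hij (Sum.inl_injective (f.injective h))
  have hsadj1 : ∀ i : Fin 3, G.Adj (s i) (s (i+1)) := fun i =>
    (Qs (i+1)).2.1 (hsQ2 i) (hsQ1 (i+1)) (hsne i (i+1) (hne1 i))
  have htri : ∀ i j : Fin 3, i ≠ j → j = i + 1 ∨ j = i + 2 := by decide
  have hsG : ∀ i j : Fin 3, i ≠ j → G.Adj (s i) (s j) := by
    intro i j hij
    rcases htri i j hij with rfl | rfl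
    · exact hsadj1 i
    · have := hsadj1 (i+2)
      rw [h3 i] at this
      exact this.symm
  have hw' : ∀ j : Fin 3, ∃ x, x ∈ (Qs (j+2) : Set V) ∧ ¬ G.Adj x (s j) ∧ x ≠ s j := by
    intro j
    by_contra hcon
    push_neg at hcon
    have hclique : G.IsClique (insert (s j) ((Qs (j+2)) : Set V)) := by
      intro a ha b hb hne
      rcases ha with rfl | ha
      · rcases hb with rfl | hb
        · exact absurd rfl hne
        · by_contra hnadj
          exact hne ((hcon b hb (fun hh => hnadj hh.symm)).symm)
      · rcases hb with rfl | hb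
        · by_contra hnadj
          exact hne (hcon a ha hnadj)
        · exact (Qs (j+2)).2.1 ha hb hne
    have heq := (Qs (j+2)).2.2 _ hclique (Set.subset_insert _ _)
    have hmem2 : s j ∈ ((Qs (j+2)) : Set V) := by rw [heq]; exact Set.mem_insert _ _
    exact hsQ3 j hmem2
  choose w' hw'mem hw'nadj hw'ne using hw'
  have hne5 : ∀ i : Fin 3, i + 2 ≠ i + 1 := by decide
  set w : Fin 3 → V := fun i => w' (i+1) with hwdef
  have hwmem : ∀ i, w i ∈ ((Qs i) : Set V) := by
    intro i; have := hw'mem (i+1); rwa [h4 i] at this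
  have hwnadj : ∀ i, ¬ G.Adj (w i) (s (i+1)) := fun i => hw'nadj (i+1)
  have hwne1 : ∀ i, w i ≠ s (i+1) := fun i => hw'ne (i+1)
  have hwne0 : ∀ i, w i ≠ s i :=
    fun i h => (hwnadj i) (by rw [h]; exact hsG i (i+1) (hne1 i))
  have hwne2 : ∀ i, w i ≠ s (i+2) :=
    fun i h => (hwnadj i) (by rw [h]; exact hsG (i+2) (i+1) (hne5 i))
  have hwadj0 : ∀ i, G.Adj (w i) (s i) := fun i => (Qs i).2.1 (hwmem i) (hsQ1 i) (hwne0 i)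
  have hsQ2' : ∀ i, s (i+2) ∈ ((Qs i) : Set V) := by
    intro i; have := hsQ2 (i+2); rwa [h3 i] at this
  have hwadj2 : ∀ i, G.Adj (w i) (s (i+2)) := fun i => (Qs i).2.1 (hwmem i) (hsQ2' i) (hwne2 i)
  have htri3 : ∀ i j : Fin 3, j = i ∨ j = i + 1 ∨ j = i + 2 := by decide
  have hwneS : ∀ i j, w i ≠ s j := by
    intro i j
    rcases htri3 i j with h | h | h <;> rw [h]
    · exact hwne0 i
    · exact hwne1 i
    · exact hwne2 i
  obtain ⟨k, hk, hcopy⟩ :=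
    hajos_of_pattern G s w hsG (fun i => ⟨hwadj0 i, hwadj2 i, hwnadj i⟩) hwneS
  exact hhaj k hk hcopy

lemma forward_dir {V : Type} [Fintype V] (H : SimpleGraph V) (C I : Set V)
    (hsp : IsSplitPart H C I) (hsun : Sun3Free H) (hconn : H.Connected) :
    (∀ k ≤ 3, ¬ InducedCopy (hajos k) (Gsq H)) ∧ cliqueIneq (Gsq H) := by
  classical
  obtain ⟨hunion, hdisj, hCcl, hIind⟩ := hsp
  have hmemCI : ∀ v : V, v ∈ C ∨ v ∈ I := by
    intro v
    have : v ∈ C ∪ I := by rw [hunion]; trivial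
    exact this
  have hIC : ∀ x ∈ I, ∀ y ∈ C, x ≠ y :=
    fun x hx y hy h => (Set.disjoint_left.mp hdisj hy) (h ▸ hx)
  have hnbr : ∀ v ∈ I, ∀ u : V, u ≠ v → ∃ c ∈ C, H.Adj v c := by
    intro v hv u hneq
    obtain ⟨p⟩ := hconn.preconnected v u
    cases p with
    | nil => exact absurd rfl hneq
    | @cons _ w _ h p =>
      rcases hmemCI w with hw | hw
      · exact ⟨w, hw, h⟩
      · exact absurd h (hIind v hv w hw)
  have hCuniv : ∀ c ∈ C, ∀ v : V, v ≠ c → (Gsq H).Adj c v := by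
    intro c hc v hne
    rcases hmemCI v with hvC | hvI
    · exact ⟨hne.symm, Or.inl (hCcl hc hvC hne.symm)⟩
    · obtain ⟨d, hd, hvd⟩ := hnbr v hvI c hne.symm
      by_cases hdc : d = c
      · exact ⟨hne.symm, Or.inl (hdc ▸ hvd).symm⟩
      · exact ⟨hne.symm, Or.inr ⟨d, hCcl hc hd (Ne.symm hdc), hvd.symm⟩⟩
  have hIcommon : ∀ u ∈ I, ∀ v ∈ I, (Gsq H).Adj u v → ∃ c ∈ C, H.Adj u c ∧ H.Adj c v := by
    rintro u hu v hv ⟨hne, h | ⟨x, h1, h2⟩⟩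
    · exact absurd h (hIind u hu v hv)
    · rcases hmemCI x with hx | hx
      · exact ⟨x, hx, h1, h2⟩
      · exact absurd h1 (hIind u hu x hx)
  have htriple : ∀ u v t : V, u ∈ I → v ∈ I → t ∈ I → u ≠ v → v ≠ t → u ≠ t →
      (Gsq H).Adj u v → (Gsq H).Adj v t → (Gsq H).Adj u t →
      ∃ d ∈ C, H.Adj d u ∧ H.Adj d v ∧ H.Adj d t := by
    intro u v t hu hv ht huv hvt hut h1 h2 h3
    obtain ⟨a, ha, hau, hav⟩ := hIcommon u hu v hv h1
    obtain ⟨b, hb, hbv, hbt⟩ := hIcommon v hv t ht h2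
    obtain ⟨c, hc, hcu, hct⟩ := hIcommon u hu t ht h3
    by_cases hat : H.Adj a t
    · exact ⟨a, ha, hau.symm, hav, hat⟩
    by_cases hbu : H.Adj b u
    · exact ⟨b, hb, hbu, hbv.symm, hbt⟩
    by_cases hcv : H.Adj c v
    · exact ⟨c, hc, hcu.symm, hcv, hct⟩
    exfalso
    apply hsun
    have hab : a ≠ b := fun h => hat (h.symm ▸ hbt)
    have hac : a ≠ c := fun h => hat (h.symm ▸ hct)
    have hbc : b ≠ c := fun h => hcv (h ▸ hbv.symm)
    have hUm : ∀ i : Fin 3, (![u, v, t] i) ∈ I := by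
      intro i; fin_cases i <;> assumption
    have hCm : ∀ j : Fin 3, (![c, a, b] j) ∈ C := by
      intro j; fin_cases j <;> assumption
    refine sun_exists H ![u, v, t] ![c, a, b]
      (fun i j => hIC _ (hUm i) _ (hCm j)) (fun i j hij => hIind _ (hUm i) _ (hUm j)) ?_ ?_ ?_
    · intro i j h
      fin_cases i <;> fin_cases j <;>
        first
          | rfl
          | exact absurd h huv | exact absurd h hvt | exact absurd h hut
          | exact absurd h.symm huv | exact absurd h.symm hvt | exact absurd h.symm hut
    · intro i j hij
      refine hCcl (hCm i) (hCm j) ?_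
      fin_cases i <;> fin_cases j <;>
        first
          | exact absurd rfl hij
          | exact hab | exact hab.symm | exact hac | exact hac.symm
          | exact hbc | exact hbc.symm
    · intro i
      fin_cases i
      · exact ⟨hcu, hau, fun h => hbu h.symm⟩
      · exact ⟨hav.symm, hbv, fun h => hcv h.symm⟩
      · exact ⟨hbt.symm, hct.symm, fun h => hat h.symm⟩
  have hne1 : ∀ i : Fin 3, i ≠ i + 1 := by decide
  have hne2 : ∀ i : Fin 3, i ≠ i + 2 := by decide
  have h3 : ∀ i : Fin 3, i + 2 + 1 = i := by decide
  have h4 : ∀ i : Fin 3, i + 1 + 2 = i := by decide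
  have h6 : ∀ i : Fin 3, i + 2 + 2 = i + 1 := by decide
  have h7 : ∀ i : Fin 3, i + 1 + 1 = i + 2 := by decide
  constructor
  · -- hajos-free
    rintro k hk ⟨f, hf⟩
    set x : Fin 3 → V := fun i => f (Sum.inr i) with hx
    set y : Fin 3 → V := fun i => f (Sum.inl i) with hy
    have hxadj : ∀ i j : Fin 3, i ≠ j → (Gsq H).Adj (x i) (x j) := by
      intro i j hij
      refine (hf (Sum.inr i) (Sum.inr j)).mp ?_
      simp [hajos]
      exact hij
    have hyx : ∀ i : Fin 3, (Gsq H).Adj (y i) (x i) ∧ (Gsq H).Adj (y i) (x (i+1)) ∧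
        ¬ (Gsq H).Adj (y i) (x (i+2)) := by
      intro i
      fin_cases i <;>
        exact ⟨(hf _ _).mp (by simp [hajos]), (hf _ _).mp (by simp [hajos]),
          fun h => by simpa [hajos] using (hf _ _).mpr h⟩
    have hyI : ∀ i, y i ∈ I := by
      intro i
      rcases hmemCI (y i) with hcy | hiy
      · exfalso
        apply (hyx i).2.2
        refine hCuniv (y i) hcy (x (i+2)) ?_
        intro h
        exact absurd (f.injective h) (by simp)
      · exact hiy
    have hxI : ∀ j, x j ∈ I := by
      intro j
      rcases hmemCI (x j) with hcx | hix
      · exfalso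
        have h2 := (hyx (j+1)).2.2
        rw [h4 j] at h2
        apply h2
        refine (hCuniv (x j) hcx (y (j+1)) ?_).symm
        intro h
        exact absurd (f.injective h) (by simp)
      · exact hix
    have hneyx : ∀ i j : Fin 3, y i ≠ x j := by
      intro i j h
      exact absurd (f.injective h) (by simp)
    have hd : ∀ i : Fin 3, ∃ d ∈ C, H.Adj d (y i) ∧ H.Adj d (x i) ∧ H.Adj d (x (i+1)) := by
      intro i
      refine htriple (y i) (x i) (x (i+1)) (hyI i) (hxI i) (hxI (i+1))
        (hneyx i i) ?_ (hneyx i (i+1)) (hyx i).1 (hxadj i (i+1) (hne1 i)) (hyx i).2.1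
      intro h
      exact (hne1 i) (Sum.inr_injective (f.injective h))
    choose d hdC hd1 hd2 hd3 using hd
    have hdn : ∀ i, ¬ H.Adj (d i) (x (i+2)) := by
      intro i h
      exact (hyx i).2.2 ⟨hneyx i (i+2), Or.inr ⟨d i, (hd1 i).symm, h⟩⟩
    apply hsun
    have hdinj : ∀ i : Fin 3, d i ≠ d (i+1) ∧ d i ≠ d (i+2) := by
      intro i
      constructor
      · intro h
        have h2 := hdn (i+1)
        rw [h4 i] at h2
        exact h2 (h ▸ hd2 i)
      · intro h
        have h2 := hdn (i+2)
        rw [h6 i] at h2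
        exact h2 (h ▸ hd3 i)
    have htri : ∀ i j : Fin 3, i ≠ j → j = i + 1 ∨ j = i + 2 := by decide
    refine sun_exists H x (fun j => d (j+2))
      (fun i j => hIC _ (hxI i) _ (hdC (j+2))) (fun i j hij => hIind _ (hxI i) _ (hxI j))
      (fun i j h => Sum.inr_injective (f.injective h)) ?_ ?_
    · intro i j hij
      refine hCcl (hdC (i+2)) (hdC (j+2)) ?_
      show d (i + 2) ≠ d (j + 2)
      rcases htri i j hij with h | h
      · subst h
        rw [h4 i]
        exact (hdinj i).2.symm
      · subst h
        rw [h6 i]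
        have h8 := (hdinj (i+1)).1
        rw [h7 i] at h8
        exact h8.symm
    · intro i
      refine ⟨?_, ?_, ?_⟩
      · show H.Adj (x i) (d (i+2))
        have h5 := hd3 (i+2)
        rw [h3 i] at h5
        exact h5.symm
      · show H.Adj (x i) (d (i+1+2))
        rw [h4 i]
        exact (hd2 i).symm
      · show ¬ H.Adj (x i) (d (i+2+2))
        rw [h6 i]
        intro h
        have h2 := hdn (i+1)
        rw [h4 i] at h2
        exact h2 h.symm
  · -- cliqueIneq
    show (maxCliques (Gsq H)).ncard ≤ (core (Gsq H)).ncard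
    rcases Set.eq_empty_or_nonempty C with hCe | ⟨c₀, hc₀⟩
    · -- C empty: V is a singleton
      have hallI : ∀ v : V, v ∈ I := by
        intro v
        rcases hmemCI v with h | h
        · rw [hCe] at h; exact absurd h (Set.notMem_empty v)
        · exact h
      have hnoadj : ∀ a b : V, ¬ H.Adj a b := fun a b h => hIind a (hallI a) b (hallI b) h
      have hss : ∀ a b : V, a = b := by
        intro a b
        obtain ⟨p⟩ := hconn.preconnected a b
        cases p with
        | nil => rfl
        | cons h _ => exact absurd h (hnoadj _ _)
      haveI : Nonempty V := hconn.nonempty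
      have huc : (Gsq H).IsClique Set.univ := by
        intro a _ b _ hne
        exact absurd (hss a b) hne
      have hum : Set.univ ∈ maxCliques (Gsq H) :=
        ⟨huc, fun R _ hsub => (Set.univ_subset_iff.mp hsub).symm⟩
      have hmax : maxCliques (Gsq H) = {Set.univ} := by
        ext Q
        constructor
        · intro hQ
          exact Set.mem_singleton_iff.mpr (hQ.2 _ huc (Set.subset_univ _))
        · intro hQ
          rw [Set.mem_singleton_iff] at hQ
          subst hQ
          exact hum
      rw [core, hmax, Set.sInter_singleton, Set.ncard_singleton]
      have hpos : 0 < (Set.univ : Set V).ncard := (Set.ncard_pos (Set.toFinite _)).mpr Set.univ_nonempty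
      omega
    · -- C nonempty
      have hCsub : ∀ Q ∈ maxCliques (Gsq H), C ⊆ Q := by
        intro Q hQ c hc
        have hcl : (Gsq H).IsClique (insert c Q) := by
          intro a ha b hb hne
          rcases ha with rfl | ha
          · rcases hb with rfl | hb
            · exact absurd rfl hne
            · exact hCuniv a hc b (Ne.symm hne)
          · rcases hb with rfl | hb
            · exact (hCuniv b hc a hne).symm
            · exact hQ.1 ha hb hne
        have heq := hQ.2 _ hcl (Set.subset_insert _ _)
        rw [heq]
        exact Set.mem_insert _ _
      have hHelly : ∀ (S : Finset V), ↑S ⊆ I → S.Nonempty →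
          (∀ u ∈ S, ∀ v ∈ S, u ≠ v → (Gsq H).Adj u v) → ∃ d ∈ C, ∀ v ∈ S, H.Adj d v := by
        intro S
        induction S using Finset.strongInductionOn with
        | _ S IH =>
        intro hSI hSne hSadj
        have hpos : 0 < S.card := Finset.card_pos.mpr hSne
        by_cases h1 : S.card ≤ 2
        · rcases Nat.lt_or_ge S.card 2 with hlt | hge
          · have hc1 : S.card = 1 := by omega
            obtain ⟨v, rfl⟩ := Finset.card_eq_one.mp hc1
            have hvI : v ∈ I := hSI (by simp)
            obtain ⟨c, hc, hvc⟩ := hnbr v hvI c₀ (hIC v hvI c₀ hc₀).symm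
            refine ⟨c, hc, fun w hw => ?_⟩
            rw [Finset.mem_singleton.mp hw]
            exact hvc.symm
          · have hc2 : S.card = 2 := by omega
            obtain ⟨u, v, huv, rfl⟩ := Finset.card_eq_two.mp hc2
            obtain ⟨c, hc, hadj1, hadj2⟩ := hIcommon u (hSI (by simp)) v (hSI (by simp))
              (hSadj u (by simp) v (by simp) huv)
            refine ⟨c, hc, fun w hw => ?_⟩
            rcases Finset.mem_insert.mp hw with rfl | hw
            · exact hadj1.symm
            · rw [Finset.mem_singleton.mp hw]
              exact hadj2
        · push_neg at h1
          obtain ⟨e1, he1⟩ := hSne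
          have hcard2 : 0 < (S.erase e1).card := by
            rw [Finset.card_erase_of_mem he1]; omega
          obtain ⟨e2, he2⟩ := Finset.card_pos.mp hcard2
          have hcard3 : 0 < ((S.erase e1).erase e2).card := by
            rw [Finset.card_erase_of_mem he2, Finset.card_erase_of_mem he1]; omega
          obtain ⟨e3, he3⟩ := Finset.card_pos.mp hcard3
          have he2S : e2 ∈ S := Finset.mem_of_mem_erase he2
          have he3S : e3 ∈ S := Finset.mem_of_mem_erase (Finset.mem_of_mem_erase he3)
          have h21 : e2 ≠ e1 := Finset.ne_of_mem_erase he2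
          have h32 : e3 ≠ e2 := Finset.ne_of_mem_erase he3
          have h31 : e3 ≠ e1 := Finset.ne_of_mem_erase (Finset.mem_of_mem_erase he3)
          have hIH : ∀ e ∈ S, ∃ d ∈ C, ∀ v ∈ S.erase e, H.Adj d v := by
            intro e he
            refine IH (S.erase e) (Finset.erase_ssubset he) ?_ ?_ ?_
            · intro xa hx
              exact hSI (Finset.mem_coe.mpr (Finset.mem_of_mem_erase (Finset.mem_coe.mp hx)))
            · refine Finset.card_pos.mp ?_
              rw [Finset.card_erase_of_mem he]; omega
            · intro u hu v hv hne
              exact hSadj u (Finset.mem_of_mem_erase hu) v (Finset.mem_of_mem_erase hv) hne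
          obtain ⟨xx, hxC, hx⟩ := hIH e1 he1
          obtain ⟨yy, hyC, hy⟩ := hIH e2 he2S
          obtain ⟨zz, hzC, hz⟩ := hIH e3 he3S
          by_cases hx1 : H.Adj xx e1
          · refine ⟨xx, hxC, fun v hv => ?_⟩
            by_cases hv1 : v = e1
            · subst hv1; exact hx1
            · exact hx v (Finset.mem_erase.mpr ⟨hv1, hv⟩)
          by_cases hy2 : H.Adj yy e2
          · refine ⟨yy, hyC, fun v hv => ?_⟩
            by_cases hv2 : v = e2
            · subst hv2; exact hy2
            · exact hy v (Finset.mem_erase.mpr ⟨hv2, hv⟩)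
          by_cases hz3 : H.Adj zz e3
          · refine ⟨zz, hzC, fun v hv => ?_⟩
            by_cases hv3 : v = e3
            · subst hv3; exact hz3
            · exact hz v (Finset.mem_erase.mpr ⟨hv3, hv⟩)
          exfalso
          apply hsun
          have hxe2 : H.Adj xx e2 := hx e2 (Finset.mem_erase.mpr ⟨h21, he2S⟩)
          have hxe3 : H.Adj xx e3 := hx e3 (Finset.mem_erase.mpr ⟨h31, he3S⟩)
          have hye1 : H.Adj yy e1 := hy e1 (Finset.mem_erase.mpr ⟨Ne.symm h21, he1⟩)
          have hye3 : H.Adj yy e3 := hy e3 (Finset.mem_erase.mpr ⟨h32, he3S⟩)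
          have hze1 : H.Adj zz e1 := hz e1 (Finset.mem_erase.mpr ⟨Ne.symm h31, he1⟩)
          have hze2 : H.Adj zz e2 := hz e2 (Finset.mem_erase.mpr ⟨Ne.symm h32, he2S⟩)
          have hxy : xx ≠ yy := fun h => hx1 (h.symm ▸ hye1)
          have hxz : xx ≠ zz := fun h => hx1 (h.symm ▸ hze1)
          have hyz : yy ≠ zz := fun h => hy2 (h.symm ▸ hze2)
          have hUm : ∀ i : Fin 3, (![e1, e2, e3] i) ∈ I := by
            intro i
            fin_cases i
            · exact hSI (Finset.mem_coe.mpr he1)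
            · exact hSI (Finset.mem_coe.mpr he2S)
            · exact hSI (Finset.mem_coe.mpr he3S)
          have hCm : ∀ j : Fin 3, (![yy, zz, xx] j) ∈ C := by
            intro j; fin_cases j <;> assumption
          refine sun_exists H ![e1, e2, e3] ![yy, zz, xx]
            (fun i j => hIC _ (hUm i) _ (hCm j))
            (fun i j hij => hIind _ (hUm i) _ (hUm j)) ?_ ?_ ?_
          · intro i j h
            fin_cases i <;> fin_cases j <;>
              first
                | rfl
                | exact absurd h.symm h21 | exact absurd h.symm h31 | exact absurd h.symm h32
                | exact absurd h h21 | exact absurd h h31 | exact absurd h h32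
          · intro i j hij
            refine hCcl (hCm i) (hCm j) ?_
            fin_cases i <;> fin_cases j <;>
              first
                | exact absurd rfl hij
                | exact hyz | exact hyz.symm
                | exact hxy.symm | exact hxy
                | exact hxz.symm | exact hxz
          · intro i
            fin_cases i
            · exact ⟨hye1.symm, hze1.symm, fun h => hx1 h.symm⟩
            · exact ⟨hze2.symm, hxe2.symm, fun h => hy2 h.symm⟩
            · exact ⟨hxe3.symm, hye3.symm, fun h => hz3 h.symm⟩
      have hrep : ∀ Q ∈ maxCliques (Gsq H), ∃ d, d ∈ C ∧
          Q = C ∪ {v | v ∈ I ∧ H.Adj d v} := by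
        intro Q hQ
        have hQI : ∃ d, d ∈ C ∧ ∀ v, v ∈ Q → v ∈ I → H.Adj d v := by
          by_cases hcase : (Q ∩ I).Nonempty
          · have ha1 : ↑(Set.toFinite (Q ∩ I)).toFinset ⊆ I := by
              intro xa hx
              exact ((Set.Finite.mem_toFinset _).mp (Finset.mem_coe.mp hx)).2
            have ha2 : (Set.toFinite (Q ∩ I)).toFinset.Nonempty := by
              obtain ⟨v, hv⟩ := hcase
              exact ⟨v, (Set.Finite.mem_toFinset _).mpr hv⟩
            have ha3 : ∀ u ∈ (Set.toFinite (Q ∩ I)).toFinset,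
                ∀ v ∈ (Set.toFinite (Q ∩ I)).toFinset, u ≠ v → (Gsq H).Adj u v := by
              intro u hu v hv hne
              exact hQ.1 ((Set.Finite.mem_toFinset _).mp hu).1
                ((Set.Finite.mem_toFinset _).mp hv).1 hne
            obtain ⟨d, hd, hdall⟩ := hHelly (Set.toFinite (Q ∩ I)).toFinset ha1 ha2 ha3
            exact ⟨d, hd, fun v hvQ hvI =>
              hdall v ((Set.Finite.mem_toFinset _).mpr ⟨hvQ, hvI⟩)⟩
          · exact ⟨c₀, hc₀, fun v hvQ hvI => (hcase ⟨v, hvQ, hvI⟩).elim⟩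
        obtain ⟨d, hdC2, hdadj⟩ := hQI
        refine ⟨d, hdC2, ?_⟩
        have hKcl : (Gsq H).IsClique (C ∪ {v | v ∈ I ∧ H.Adj d v}) := by
          intro a ha b hb hne
          rcases ha with haC | haI
          · exact hCuniv a haC b (Ne.symm hne)
          · rcases hb with hbC | hbI
            · exact (hCuniv b hbC a hne).symm
            · exact ⟨hne, Or.inr ⟨d, haI.2.symm, hbI.2⟩⟩
        have hQK : Q ⊆ C ∪ {v | v ∈ I ∧ H.Adj d v} := by
          intro q hq
          rcases hmemCI q with h | h
          · exact Or.inl h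
          · exact Or.inr ⟨h, hdadj q hq h⟩
        exact hQ.2 _ hKcl hQK
      have hrepc : ∀ Q : Set V, ∃ d, Q ∈ maxCliques (Gsq H) →
          d ∈ C ∧ Q = C ∪ {v | v ∈ I ∧ H.Adj d v} := by
        intro Q
        by_cases hQ : Q ∈ maxCliques (Gsq H)
        · obtain ⟨d, hd⟩ := hrep Q hQ
          exact ⟨d, fun _ => hd⟩
        · exact ⟨c₀, fun h => absurd h hQ⟩
      choose dfun hdfun using hrepc
      have hinj : Set.InjOn dfun (maxCliques (Gsq H)) := by
        intro Q hQ Q' hQ' heq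
        rw [(hdfun Q hQ).2, (hdfun Q' hQ').2, heq]
      have hCcore : C ⊆ core (Gsq H) :=
        fun c hc => Set.mem_sInter.mpr fun Q hQ => hCsub Q hQ hc
      calc (maxCliques (Gsq H)).ncard = (dfun '' maxCliques (Gsq H)).ncard :=
            (Set.ncard_image_of_injOn hinj).symm
        _ ≤ (core (Gsq H)).ncard := by
            refine Set.ncard_le_ncard ?_ (Set.toFinite _)
            rintro _ ⟨Q, hQ, rfl⟩
            exact hCcore ((hdfun Q hQ).1)
theorem square_of_sun3Free_split_iff {V : Type} [Fintype V] (G : SimpleGraph V) :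
    (∃ H : SimpleGraph V, IsSplit H ∧ Sun3Free H ∧ H.Connected ∧ Gsq H = G) ↔
      (∀ k ≤ 3, ¬ InducedCopy (hajos k) G) ∧ cliqueIneq G := by
  constructor
  · rintro ⟨H, ⟨C, I, hsp⟩, hsun, hconn, hGsq⟩
    subst hGsq
    exact forward_dir H C I hsp hsun hconn
  · rintro ⟨hhaj, hineq⟩
    exact backward_dir G hhaj hineq
end

section
/- A split graph is hereditary clique-Helly if and only if it contains no induced 3-sun. -/
open SimpleGraph

lemma insElim {α : Type} (p q r z : α) (hz : z ∈ ({p, q, r} : Set α)) :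
    z = p ∨ z = q ∨ z = r := by
  simpa only [Set.mem_insert_iff, Set.mem_singleton_iff] using hz
lemma memI1 {α : Type} (p q r : α) : p ∈ ({p, q, r} : Set α) := Set.mem_insert _ _
lemma memI2 {α : Type} (p q r : α) : q ∈ ({p, q, r} : Set α) :=
  Set.mem_insert_of_mem _ (Set.mem_insert _ _)
lemma memI3 {α : Type} (p q r : α) : r ∈ ({p, q, r} : Set α) :=
  Set.mem_insert_of_mem _ (Set.mem_insert_of_mem _ rfl)

lemma sun_adj01 : (sunGraph 3).Adj (Sum.inl 0) (Sum.inr 0) := by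
  simp [sunGraph, SimpleGraph.fromRel_adj]
lemma sun_adj02 : (sunGraph 3).Adj (Sum.inl 0) (Sum.inr 1) := by
  simp [sunGraph, SimpleGraph.fromRel_adj]
lemma sun_adj11 : (sunGraph 3).Adj (Sum.inl 1) (Sum.inr 1) := by
  simp [sunGraph, SimpleGraph.fromRel_adj]
lemma sun_adj12 : (sunGraph 3).Adj (Sum.inl 1) (Sum.inr 2) := by
  simp [sunGraph, SimpleGraph.fromRel_adj]
lemma sun_adj21 : (sunGraph 3).Adj (Sum.inl 2) (Sum.inr 2) := by
  simp [sunGraph, SimpleGraph.fromRel_adj]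
lemma sun_adj22 : (sunGraph 3).Adj (Sum.inl 2) (Sum.inr 0) := by
  simp [sunGraph, SimpleGraph.fromRel_adj]
lemma sun_adjrr01 : (sunGraph 3).Adj (Sum.inr 0) (Sum.inr 1) := by
  simp [sunGraph, SimpleGraph.fromRel_adj]
lemma sun_adjrr12 : (sunGraph 3).Adj (Sum.inr 1) (Sum.inr 2) := by
  simp [sunGraph, SimpleGraph.fromRel_adj]
lemma sun_adjrr20 : (sunGraph 3).Adj (Sum.inr 2) (Sum.inr 0) := by
  simp [sunGraph, SimpleGraph.fromRel_adj]
lemma sun_max0 : ∀ s, s ≠ Sum.inl 0 → s ≠ Sum.inr 0 → s ≠ Sum.inr 1 →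
    ¬ (sunGraph 3).Adj s (Sum.inl 0) := by
  rintro (i | i) h1 h2 h3 <;> fin_cases i <;>
    simp_all [sunGraph, SimpleGraph.fromRel_adj]
lemma sun_max1 : ∀ s, s ≠ Sum.inl 1 → s ≠ Sum.inr 1 → s ≠ Sum.inr 2 →
    ¬ (sunGraph 3).Adj s (Sum.inl 1) := by
  rintro (i | i) h1 h2 h3 <;> fin_cases i <;>
    simp_all [sunGraph, SimpleGraph.fromRel_adj]
lemma sun_max2 : ∀ s, s ≠ Sum.inl 2 → s ≠ Sum.inr 2 → s ≠ Sum.inr 0 →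
    ¬ (sunGraph 3).Adj s (Sum.inl 2) := by
  rintro (i | i) h1 h2 h3 <;> fin_cases i <;>
    simp_all [sunGraph, SimpleGraph.fromRel_adj]

lemma sun3_embed_aux {V : Type} (H : SimpleGraph V)
    (x1 x2 x3 y1 y2 y3 : V)
    (ax12 : H.Adj x1 x2) (ax13 : H.Adj x1 x3) (ax23 : H.Adj x2 x3)
    (ay1x2 : H.Adj y1 x2) (ay1x3 : H.Adj y1 x3)
    (ay2x1 : H.Adj y2 x1) (ay2x3 : H.Adj y2 x3)
    (ay3x1 : H.Adj y3 x1) (ay3x2 : H.Adj y3 x2)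
    (ny1x1 : ¬ H.Adj y1 x1) (ny2x2 : ¬ H.Adj y2 x2) (ny3x3 : ¬ H.Adj y3 x3)
    (ny12 : ¬ H.Adj y1 y2) (ny13 : ¬ H.Adj y1 y3) (ny23 : ¬ H.Adj y2 y3) :
    InducedCopy (sunGraph 3) H := by
  have hy1x1 : y1 ≠ x1 := fun h => ny12 (Adj.symm (h ▸ ay2x1))
  have hy2x2 : y2 ≠ x2 := fun h => ny12 (h ▸ ay1x2)
  have hy3x3 : y3 ≠ x3 := fun h => ny13 (h ▸ ay1x3)
  have hy12 : y1 ≠ y2 := fun h => ny1x1 (h ▸ ay2x1)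
  have hy13 : y1 ≠ y3 := fun h => ny1x1 (h ▸ ay3x1)
  have hy23 : y2 ≠ y3 := fun h => ny2x2 (h ▸ ay3x2)
  refine ⟨⟨Sum.elim ![y3, y1, y2] ![x1, x2, x3], ?_⟩, ?_⟩
  · rintro (a | a) (b | b) hab <;> fin_cases a <;> fin_cases b <;>
      simp only [Sum.elim_inl, Sum.elim_inr, Matrix.cons_val_zero, Matrix.cons_val_one,
        Matrix.head_cons, Matrix.cons_val_two, Matrix.tail_cons] at hab <;>
      first
        | rfl
        | (exfalso; first
            | exact hy12 hab | exact hy13 hab | exact hy23 hab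
            | exact hy12 hab.symm | exact hy13 hab.symm | exact hy23 hab.symm
            | exact hy1x1 hab | exact hy2x2 hab | exact hy3x3 hab
            | exact ay1x2.ne hab | exact ay1x3.ne hab
            | exact ay2x1.ne hab | exact ay2x3.ne hab
            | exact ay3x1.ne hab | exact ay3x2.ne hab
            | exact ay1x2.ne hab.symm | exact ay1x3.ne hab.symm
            | exact ay2x1.ne hab.symm | exact ay2x3.ne hab.symm
            | exact ay3x1.ne hab.symm | exact ay3x2.ne hab.symm
            | exact hy1x1 hab.symm | exact hy2x2 hab.symm | exact hy3x3 hab.symm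
            | exact ax12.ne hab | exact ax13.ne hab | exact ax23.ne hab
            | exact ax12.ne hab.symm | exact ax13.ne hab.symm | exact ax23.ne hab.symm)
  · rintro (a | a) (b | b) <;> fin_cases a <;> fin_cases b <;>
      simp only [sunGraph, SimpleGraph.fromRel_adj, Sum.elim_inl, Sum.elim_inr,
        Matrix.cons_val_zero, Matrix.cons_val_one, Matrix.head_cons,
        Matrix.cons_val_two, Matrix.tail_cons, ne_eq] <;>
      norm_num <;>
      first
        | assumption
        | exact fun h => ny12 h.symm
        | exact fun h => ny13 h.symm
        | exact fun h => ny23 h.symm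
        | exact fun h => ny1x1 h.symm
        | exact fun h => ny2x2 h.symm
        | exact fun h => ny3x3 h.symm
        | exact ay1x2.symm | exact ay1x3.symm
        | exact ay2x1.symm | exact ay2x3.symm
        | exact ay3x1.symm | exact ay3x2.symm
        | exact ax12.symm | exact ax13.symm | exact ax23.symm
        | exact ⟨hy12, ny12⟩
        | tauto

open Classical in
lemma split_sun3free_cliqueHelly {V : Type} [Finite V] (H : SimpleGraph V) (C I : Set V)
    (hCI : C ∪ I = Set.univ) (hdisj : Disjoint C I) (hC : H.IsClique C)
    (hI : ∀ a ∈ I, ∀ b ∈ I, ¬ H.Adj a b) (hfree : Sun3Free H) : CliqueHelly H := by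
  intro S hS hne hpair
  by_contra hempty
  rw [Set.not_nonempty_iff_eq_empty] at hempty
  have memCI : ∀ x : V, x ∈ C ∨ x ∈ I := fun x => by
    have : x ∈ C ∪ I := hCI ▸ Set.mem_univ x
    exact this
  have hQne : ∀ Q ∈ S, Q.Nonempty := fun Q hQ => by
    have := hpair Q hQ Q hQ
    simpa using this
  -- a maximal clique containing a vertex of I is determined by it
  have huniq : ∀ Q ∈ maxCliques H, ∀ x, x ∈ I → x ∈ Q →
      Q = insert x {y | H.Adj x y} := by
    intro Q hQ x hxI hxQ
    have hclq : H.IsClique (insert x {y | H.Adj x y}) := by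
      intro a ha b hb hab
      rcases ha with rfl | ha
      · rcases hb with rfl | hb
        · exact absurd rfl hab
        · exact hb
      · rcases hb with rfl | hb
        · exact Adj.symm ha
        · have haC : a ∈ C := (memCI a).resolve_right (fun haI => hI x hxI a haI ha)
          have hbC : b ∈ C := (memCI b).resolve_right (fun hbI => hI x hxI b hbI hb)
          exact hC haC hbC hab
    refine hQ.2 _ hclq ?_
    intro y hy
    by_cases h : y = x
    · subst h; exact Set.mem_insert _ _
    · exact Set.mem_insert_of_mem _ (hQ.1 hxQ hy (Ne.symm h))
  -- distinct maximal cliques intersect inside C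
  have hdistC : ∀ Q ∈ S, ∀ R ∈ S, Q ≠ R → ∀ x, x ∈ Q → x ∈ R → x ∈ C := by
    intro Q hQ R hR hQR x hxQ hxR
    rcases memCI x with h | h
    · exact h
    · exact absurd ((huniq Q (hS hQ) x h hxQ).trans (huniq R (hS hR) x h hxR).symm) hQR
  obtain ⟨Q0, hQ0S⟩ := hne
  by_cases hall : ∀ R ∈ S, R = Q0
  · obtain ⟨x, hx⟩ := hQne Q0 hQ0S
    have hmem : x ∈ ⋂₀ S := fun R hR => (hall R hR) ▸ hx
    rw [hempty] at hmem
    exact hmem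
  push_neg at hall
  obtain ⟨R0, hR0S, hR0ne⟩ := hall
  -- the big intersection with C is empty
  have hSinter : (⋂ Q ∈ S, (Q ∩ C)) = ∅ := by
    rw [Set.eq_empty_iff_forall_notMem]
    intro x hx
    have hmem : x ∈ ⋂₀ S := fun R hR => (Set.mem_iInter₂.1 hx R hR).1
    rw [hempty] at hmem
    exact hmem
  have hexists : ∃ n, ∃ T, T ⊆ S ∧ T.ncard = n ∧ (⋂ Q ∈ T, (Q ∩ C)) = ∅ :=
    ⟨S.ncard, S, subset_rfl, rfl, hSinter⟩
  obtain ⟨T, hTS, hTn, hTempty⟩ := Nat.find_spec hexists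
  have hmin : ∀ T', T' ⊆ S → (⋂ Q ∈ T', (Q ∩ C)) = ∅ → Nat.find hexists ≤ T'.ncard :=
    fun T' h1 h2 => Nat.find_min' hexists ⟨T', h1, rfl, h2⟩
  have hTfin : T.Finite := Set.toFinite T
  have hT0 : T.Nonempty := by
    rcases T.eq_empty_or_nonempty with rfl | h
    · simp only [Set.mem_empty_iff_false, Set.iInter_of_empty, Set.iInter_univ] at hTempty
      obtain ⟨x, _⟩ := hQne Q0 hQ0S
      have : x ∈ (Set.univ : Set V) := Set.mem_univ x
      rw [hTempty] at this
      exact absurd this (Set.notMem_empty x)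
    · exact h
  -- T has at least 3 elements
  have hT3 : 3 ≤ T.ncard := by
    by_contra h
    push_neg at h
    interval_cases hn : T.ncard
    · exact absurd (Set.ncard_pos hTfin |>.2 hT0) (by omega)
    · obtain ⟨Q, rfl⟩ := Set.ncard_eq_one.1 hn
      have hQS : Q ∈ S := hTS rfl
      simp only [Set.mem_singleton_iff, Set.iInter_iInter_eq_left] at hTempty
      have hex : ∃ R ∈ S, R ≠ Q := by
        by_cases hq : Q = Q0
        · exact ⟨R0, hR0S, hq ▸ hR0ne⟩
        · exact ⟨Q0, hQ0S, fun h => hq h.symm⟩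
      obtain ⟨R, hRS, hRQ⟩ := hex
      obtain ⟨x, hxQ, hxR⟩ := hpair Q hQS R hRS
      have hxC : x ∈ C := hdistC Q hQS R hRS (fun h => hRQ h.symm) x hxQ hxR
      have : x ∈ Q ∩ C := ⟨hxQ, hxC⟩
      rw [hTempty] at this
      exact this
    · obtain ⟨Q, R, hQR, rfl⟩ := Set.ncard_eq_two.1 hn
      have hQS : Q ∈ S := hTS (Set.mem_insert _ _)
      have hRS : R ∈ S := hTS (Set.mem_insert_of_mem _ rfl)
      obtain ⟨x, hxQ, hxR⟩ := hpair Q hQS R hRS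
      have hxC : x ∈ C := hdistC Q hQS R hRS hQR x hxQ hxR
      have hmem : x ∈ ⋂ P ∈ ({Q, R} : Set (Set V)), (P ∩ C) := by
        simp only [Set.mem_iInter₂]
        intro P hP
        simp only [Set.mem_insert_iff, Set.mem_singleton_iff] at hP
        rcases hP with h | h
        · rw [h]; exact ⟨hxQ, hxC⟩
        · rw [h]; exact ⟨hxR, hxC⟩
      rw [hTempty] at hmem
      exact hmem
  -- pick three distinct elements of T
  obtain ⟨Q1, hQ1T⟩ := hT0
  have h2 : (T \ {Q1}).Nonempty := by
    rw [← Set.ncard_pos hTfin.diff]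
    have := Set.ncard_diff_singleton_add_one hQ1T hTfin
    omega
  obtain ⟨Q2, hQ2d⟩ := h2
  have hQ2T : Q2 ∈ T := hQ2d.1
  have hQ21 : Q2 ≠ Q1 := by simpa using hQ2d.2
  have h3 : ((T \ {Q1}) \ {Q2}).Nonempty := by
    rw [← Set.ncard_pos hTfin.diff.diff]
    have e1 := Set.ncard_diff_singleton_add_one hQ1T hTfin
    have e2 := Set.ncard_diff_singleton_add_one hQ2d hTfin.diff
    omega
  obtain ⟨Q3, hQ3d⟩ := h3
  have hQ3T : Q3 ∈ T := hQ3d.1.1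
  have hQ31 : Q3 ≠ Q1 := by simpa using hQ3d.1.2
  have hQ32 : Q3 ≠ Q2 := by simpa using hQ3d.2
  -- for each Q ∈ T there is a point in all other members (∩ C) but not in Q
  have hstep : ∀ Q ∈ T, ∃ x, (∀ R ∈ T, R ≠ Q → x ∈ R ∩ C) ∧ x ∉ Q := by
    intro Q hQT
    have hne' : (⋂ R ∈ T \ {Q}, (R ∩ C)) ≠ ∅ := by
      intro h
      have hle := hmin (T \ {Q}) ((Set.diff_subset).trans hTS) h
      have := Set.ncard_diff_singleton_add_one hQT hTfin
      omega
    obtain ⟨x, hx⟩ := Set.nonempty_iff_ne_empty.2 hne'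
    have hxparts : ∀ R ∈ T, R ≠ Q → x ∈ R ∩ C := by
      intro R hRT hRQ
      exact Set.mem_iInter₂.1 hx R ⟨hRT, by simp [hRQ]⟩
    refine ⟨x, hxparts, ?_⟩
    intro hxQ
    have hother : ∃ R ∈ T, R ≠ Q := by
      by_cases hq : Q = Q1
      · exact ⟨Q2, hQ2T, hq ▸ hQ21⟩
      · exact ⟨Q1, hQ1T, fun h => hq h.symm⟩
    obtain ⟨R, hRT, hRQ⟩ := hother
    have hxC : x ∈ C := (hxparts R hRT hRQ).2
    have hmem : x ∈ ⋂ R ∈ T, (R ∩ C) := by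
      simp only [Set.mem_iInter₂]
      intro P hPT
      by_cases hPQ : P = Q
      · rw [hPQ]; exact ⟨hxQ, hxC⟩
      · exact hxparts P hPT hPQ
    rw [hTempty] at hmem
    exact hmem
  obtain ⟨x1, hx1parts, hx1Q⟩ := hstep Q1 hQ1T
  obtain ⟨x2, hx2parts, hx2Q⟩ := hstep Q2 hQ2T
  obtain ⟨x3, hx3parts, hx3Q⟩ := hstep Q3 hQ3T
  have hx1Q2 : x1 ∈ Q2 := (hx1parts Q2 hQ2T hQ21).1
  have hx1Q3 : x1 ∈ Q3 := (hx1parts Q3 hQ3T hQ31).1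
  have hx2Q1 : x2 ∈ Q1 := (hx2parts Q1 hQ1T (Ne.symm hQ21)).1
  have hx2Q3 : x2 ∈ Q3 := (hx2parts Q3 hQ3T hQ32).1
  have hx3Q1 : x3 ∈ Q1 := (hx3parts Q1 hQ1T (Ne.symm hQ31)).1
  have hx3Q2 : x3 ∈ Q2 := (hx3parts Q2 hQ2T (Ne.symm hQ32)).1
  have hx1C : x1 ∈ C := (hx1parts Q2 hQ2T hQ21).2
  have hx2C : x2 ∈ C := (hx2parts Q1 hQ1T (Ne.symm hQ21)).2
  have hx3C : x3 ∈ C := (hx3parts Q1 hQ1T (Ne.symm hQ31)).2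
  have hx12 : x1 ≠ x2 := fun h => hx2Q (h ▸ hx1Q2)
  have hx13 : x1 ≠ x3 := fun h => hx3Q (h ▸ hx1Q3)
  have hx23 : x2 ≠ x3 := fun h => hx3Q (h ▸ hx2Q3)
  -- build the independent vertices
  have hy : ∀ Q ∈ T, ∀ x, x ∈ C → x ∉ Q → ∃ y ∈ Q, ¬ H.Adj x y ∧ y ∈ I := by
    intro Q hQT x hxC hxQ
    have hQmax := hS (hTS hQT)
    have hex : ∃ y ∈ Q, ¬ H.Adj x y := by
      by_contra h
      push_neg at h
      have hclq : H.IsClique (insert x Q) := by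
        intro a ha b hb hab
        rcases ha with rfl | ha
        · rcases hb with rfl | hb
          · exact absurd rfl hab
          · exact h b hb
        · rcases hb with rfl | hb
          · exact (h a ha).symm
          · exact hQmax.1 ha hb hab
      have heq := hQmax.2 _ hclq (Set.subset_insert x Q)
      exact hxQ (heq ▸ Set.mem_insert x Q)
    obtain ⟨y, hyQ, hyadj⟩ := hex
    have hyI : y ∈ I := (memCI y).resolve_left
      (fun hyC => hyadj (hC hxC hyC (by rintro rfl; exact hxQ hyQ)))
    exact ⟨y, hyQ, hyadj, hyI⟩
  obtain ⟨y1, hy1Q, hny1, hy1I⟩ := hy Q1 hQ1T x1 hx1C hx1Q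
  obtain ⟨y2, hy2Q, hny2, hy2I⟩ := hy Q2 hQ2T x2 hx2C hx2Q
  obtain ⟨y3, hy3Q, hny3, hy3I⟩ := hy Q3 hQ3T x3 hx3C hx3Q
  have hyx : ∀ y, y ∈ I → ∀ x, x ∈ C → y ≠ x := fun y hyI x hxC h =>
    Set.disjoint_left.1 hdisj (h ▸ hxC) hyI
  have clQ1 := (hS (hTS hQ1T)).1
  have clQ2 := (hS (hTS hQ2T)).1
  have clQ3 := (hS (hTS hQ3T)).1
  exact hfree (sun3_embed_aux H x1 x2 x3 y1 y2 y3
    (hC hx1C hx2C hx12) (hC hx1C hx3C hx13) (hC hx2C hx3C hx23)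
    (clQ1 hy1Q hx2Q1 (hyx y1 hy1I x2 hx2C))
    (clQ1 hy1Q hx3Q1 (hyx y1 hy1I x3 hx3C))
    (clQ2 hy2Q hx1Q2 (hyx y2 hy2I x1 hx1C))
    (clQ2 hy2Q hx3Q2 (hyx y2 hy2I x3 hx3C))
    (clQ3 hy3Q hx1Q3 (hyx y3 hy3I x1 hx1C))
    (clQ3 hy3Q hx2Q3 (hyx y3 hy3I x2 hx2C))
    (fun h => hny1 h.symm) (fun h => hny2 h.symm) (fun h => hny3 h.symm)
    (hI y1 hy1I y2 hy2I) (hI y1 hy1I y3 hy3I) (hI y2 hy2I y3 hy3I))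

lemma hch_sun3free {V : Type} (H : SimpleGraph V) (hH : HCH H) : Sun3Free H := by
  rintro ⟨f, hf⟩
  have hCH := hH (Set.range f)
  set W := Set.range f with hWdef
  have hmemW : ∀ a, f a ∈ W := fun a => ⟨a, rfl⟩
  let vtx : Fin 3 ⊕ Fin 3 → ↥W := fun a => ⟨f a, hmemW a⟩
  have hvinj : ∀ a b : Fin 3 ⊕ Fin 3, vtx a = vtx b ↔ a = b := by
    intro a b
    constructor
    · intro h
      exact f.injective (congrArg Subtype.val h)
    · rintro rfl; rfl
  have hadjG : ∀ a b, (H.induce W).Adj (vtx a) (vtx b) ↔ (sunGraph 3).Adj a b := by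
    intro a b
    exact Iff.symm (hf a b)
  have hall : ∀ z : ↥W, ∃ a, vtx a = z := by
    rintro ⟨z, a, rfl⟩
    exact ⟨a, rfl⟩
  -- a triangle whose first vertex has no other neighbours is a maximal clique
  have hmaxc : ∀ (p q r : Fin 3 ⊕ Fin 3),
      (sunGraph 3).Adj p q → (sunGraph 3).Adj p r → (sunGraph 3).Adj q r →
      (∀ s, s ≠ p → s ≠ q → s ≠ r → ¬ (sunGraph 3).Adj s p) →
      ({vtx p, vtx q, vtx r} : Set ↥W) ∈ maxCliques (H.induce W) := by
    intro p q r hpq hpr hqr hmax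
    constructor
    · intro a ha b hb hne
      rcases insElim _ _ _ _ ha with rfl | rfl | rfl <;>
        rcases insElim _ _ _ _ hb with rfl | rfl | rfl <;>
        first
          | exact absurd rfl hne
          | exact (hadjG _ _).2 hpq
          | exact (hadjG _ _).2 hpr
          | exact (hadjG _ _).2 hqr
          | exact (hadjG _ _).2 hpq.symm
          | exact (hadjG _ _).2 hpr.symm
          | exact (hadjG _ _).2 hqr.symm
    · intro R hR hsub
      refine Set.Subset.antisymm hsub ?_
      intro z hz
      obtain ⟨a, rfl⟩ := hall z
      by_contra hzA
      have hap : a ≠ p := fun h => hzA (h ▸ memI1 _ _ _)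
      have haq : a ≠ q := fun h => hzA (h ▸ memI2 _ _ _)
      have har : a ≠ r := fun h => hzA (h ▸ memI3 _ _ _)
      have hadj : (H.induce W).Adj (vtx a) (vtx p) :=
        hR hz (hsub (memI1 _ _ _)) (fun h => hap ((hvinj a p).1 h))
      exact hmax a hap haq har ((hadjG a p).1 hadj)
  have hA0 := hmaxc (.inl 0) (.inr 0) (.inr 1) sun_adj01 sun_adj02 sun_adjrr01 sun_max0
  have hA1 := hmaxc (.inl 1) (.inr 1) (.inr 2) sun_adj11 sun_adj12 sun_adjrr12 sun_max1
  have hA2 := hmaxc (.inl 2) (.inr 2) (.inr 0) sun_adj21 sun_adj22 sun_adjrr20 sun_max2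
  have hsubmax : ({{vtx (.inl 0), vtx (.inr 0), vtx (.inr 1)},
      {vtx (.inl 1), vtx (.inr 1), vtx (.inr 2)},
      {vtx (.inl 2), vtx (.inr 2), vtx (.inr 0)}} : Set (Set ↥W)) ⊆
      maxCliques (H.induce W) := by
    intro Q hQ
    rcases insElim _ _ _ _ hQ with rfl | rfl | rfl
    · exact hA0
    · exact hA1
    · exact hA2
  have hpairw : ∀ Q ∈ ({{vtx (.inl 0), vtx (.inr 0), vtx (.inr 1)},
      {vtx (.inl 1), vtx (.inr 1), vtx (.inr 2)},
      {vtx (.inl 2), vtx (.inr 2), vtx (.inr 0)}} : Set (Set ↥W)),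
      ∀ R ∈ ({{vtx (.inl 0), vtx (.inr 0), vtx (.inr 1)},
      {vtx (.inl 1), vtx (.inr 1), vtx (.inr 2)},
      {vtx (.inl 2), vtx (.inr 2), vtx (.inr 0)}} : Set (Set ↥W)),
      (Q ∩ R).Nonempty := by
    intro Q hQ R hR
    rcases insElim _ _ _ _ hQ with rfl | rfl | rfl <;>
      rcases insElim _ _ _ _ hR with rfl | rfl | rfl
    · exact ⟨vtx (.inl 0), memI1 _ _ _, memI1 _ _ _⟩
    · exact ⟨vtx (.inr 1), memI3 _ _ _, memI2 _ _ _⟩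
    · exact ⟨vtx (.inr 0), memI2 _ _ _, memI3 _ _ _⟩
    · exact ⟨vtx (.inr 1), memI2 _ _ _, memI3 _ _ _⟩
    · exact ⟨vtx (.inl 1), memI1 _ _ _, memI1 _ _ _⟩
    · exact ⟨vtx (.inr 2), memI3 _ _ _, memI2 _ _ _⟩
    · exact ⟨vtx (.inr 0), memI3 _ _ _, memI2 _ _ _⟩
    · exact ⟨vtx (.inr 2), memI2 _ _ _, memI3 _ _ _⟩
    · exact ⟨vtx (.inl 2), memI1 _ _ _, memI1 _ _ _⟩
  obtain ⟨z, hz⟩ := hCH _ hsubmax ⟨_, memI1 _ _ _⟩ hpairw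
  have h0 : z ∈ ({vtx (.inl 0), vtx (.inr 0), vtx (.inr 1)} : Set ↥W) :=
    hz _ (memI1 _ _ _)
  have h1 : z ∈ ({vtx (.inl 1), vtx (.inr 1), vtx (.inr 2)} : Set ↥W) :=
    hz _ (memI2 _ _ _)
  have h2 : z ∈ ({vtx (.inl 2), vtx (.inr 2), vtx (.inr 0)} : Set ↥W) :=
    hz _ (memI3 _ _ _)
  obtain ⟨a, rfl⟩ := hall z
  have e0 := insElim _ _ _ _ h0
  have e1 := insElim _ _ _ _ h1
  have e2 := insElim _ _ _ _ h2
  simp only [hvinj] at e0 e1 e2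
  rcases e0 with rfl | rfl | rfl <;>
    rcases e1 with h1' | h1' | h1' <;>
    first
      | exact absurd h1' (by decide)
      | (rcases e2 with h2' | h2' | h2' <;> exact absurd h2' (by decide))

theorem split_HCH_iff_sun3Free {V : Type} [Fintype V] (H : SimpleGraph V)
    (hsplit : IsSplit H) : HCH H ↔ Sun3Free H := by
  obtain ⟨C, I, hCI, hdisj, hC, hI⟩ := hsplit
  constructor
  · exact hch_sun3free H
  · intro hfree S
    apply split_sun3free_cliqueHelly (H.induce S) (Subtype.val ⁻¹' C) (Subtype.val ⁻¹' I)
    · rw [Set.eq_univ_iff_forall]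
      intro x
      have hx : (x : V) ∈ C ∪ I := hCI ▸ Set.mem_univ _
      rcases hx with h | h
      · exact Or.inl h
      · exact Or.inr h
    · rw [Set.disjoint_left]
      intro a haC haI
      exact Set.disjoint_left.1 hdisj haC haI
    · intro a ha b hb hne
      exact hC ha hb (fun h => hne (Subtype.ext h))
    · intro a ha b hb hadj
      exact hI a.val ha b.val hb hadj
    · rintro ⟨g, hg⟩
      exact hfree ⟨⟨fun a => (g a).val, fun a b h => g.injective (Subtype.ext h)⟩,
        fun a b => hg a b⟩
end
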